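/- Let G be a group with word length ∥·∥ and word metric d coming from a symmetric generating set (possibly infinite), let r, s, w ∈ G with r = w s w⁻¹, and let L₁ ≥ 0. Let g₀ = 1, g₁, …, g_N = r be a geodesic from the identity to r (so N = ∥r∥ and d(g_i, g_j) = |i − j| for all i, j), and suppose that both w and ws lie within distance L₁ of the set {g₀, …, g_N}. Then (∥r∥ − ∥s∥)/2 ≤ ∥w∥ ≤ (∥r∥ + ∥s∥)/2 + 2L₁. -/

import Mathlib

/-- The word length of `g` with respect to a generating set `S`: the least `n` such that
`g` is a product of `n` elements of `S`. -/
noncomputable def wordLength {G : Type*} [Group G] (S : Set G) (g : G) : ℕ :=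
  sInf {n : ℕ | ∃ l : List G, (∀ x ∈ l, x ∈ S) ∧ l.length = n ∧ l.prod = g}

/-- The word metric `d(x,y) = ∥x⁻¹ y∥` associated to the generating set `S`. -/
noncomputable def wordDist {G : Type*} [Group G] (S : Set G) (x y : G) : ℕ :=
  wordLength S (x⁻¹ * y)

/-- A geodesic in the (integer-valued) word metric: a finite sequence
`γ 0, γ 1, …, γ N` with `d(γ i, γ j) = |i - j|` for all `i, j`. -/
def IsWordGeodesic {G : Type*} [Group G] (S : Set G) (N : ℕ) (γ : Fin (N + 1) → G) : Prop :=
  ∀ i j : Fin (N + 1), (wordDist S (γ i) (γ j) : ℤ) = |(i : ℤ) - (j : ℤ)|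

/-!
The lower bound is subadditivity of the word length applied to `r = w s w⁻¹`.
For the upper bound, let `γ i` and `γ j` be points of the geodesic within `L₁` of `w` and `ws`.
Then `∥w∥ ≤ i + L₁` (go from `1` to `γ i`, then to `w`) and `∥w∥ = d(ws, r) ≤ L₁ + (N - j)`,
while `i - j ≤ d(γ i, γ j) ≤ 2 L₁ + ∥s∥` since `d(w, ws) = ∥s∥`.
Adding the first two estimates and inserting the third gives `2 ∥w∥ ≤ ∥r∥ + ∥s∥ + 4 L₁`.
-/

section WordMetric

variable {G : Type*} [Group G] {S : Set G}

lemma exists_list_length_eq_wordLength (hSsymm : ∀ s ∈ S, s⁻¹ ∈ S)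
    (hSgen : Subgroup.closure S = ⊤) (g : G) :
    ∃ l : List G, (∀ x ∈ l, x ∈ S) ∧ l.length = wordLength S g ∧ l.prod = g := by
  have hg : g ∈ (Subgroup.closure S).toSubmonoid := by rw [hSgen]; trivial
  have hSinv : S⁻¹ ⊆ S := fun x hx => by simpa using hSsymm _ (Set.mem_inv.1 hx)
  rw [Subgroup.closure_toSubmonoid, Set.union_eq_left.2 hSinv] at hg
  obtain ⟨l, hl, hprod⟩ := Submonoid.exists_list_of_mem_closure hg
  exact Nat.sInf_mem (s := {n | ∃ l : List G, (∀ x ∈ l, x ∈ S) ∧ l.length = n ∧ l.prod = g})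
    ⟨l.length, l, hl, rfl, hprod⟩

lemma wordLength_prod_le {l : List G} (hl : ∀ x ∈ l, x ∈ S) :
    wordLength S l.prod ≤ l.length :=
  Nat.sInf_le ⟨l, hl, rfl, rfl⟩

lemma wordLength_mul_le (hSsymm : ∀ s ∈ S, s⁻¹ ∈ S) (hSgen : Subgroup.closure S = ⊤)
    (a b : G) : wordLength S (a * b) ≤ wordLength S a + wordLength S b := by
  obtain ⟨la, hla, hlena, rfl⟩ := exists_list_length_eq_wordLength hSsymm hSgen a
  obtain ⟨lb, hlb, hlenb, rfl⟩ := exists_list_length_eq_wordLength hSsymm hSgen b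
  rw [← hlena, ← hlenb, ← List.prod_append, ← List.length_append]
  exact wordLength_prod_le fun x hx => (List.mem_append.1 hx).elim (hla x) (hlb x)

lemma wordLength_inv_le (hSsymm : ∀ s ∈ S, s⁻¹ ∈ S) (hSgen : Subgroup.closure S = ⊤)
    (a : G) : wordLength S a⁻¹ ≤ wordLength S a := by
  obtain ⟨l, hl, hlen, rfl⟩ := exists_list_length_eq_wordLength hSsymm hSgen a
  rw [← hlen, List.prod_inv_reverse]
  simpa using wordLength_prod_le (l := (l.map fun x => x⁻¹).reverse) (by
    simp only [List.mem_reverse, List.mem_map, forall_exists_index, and_imp]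
    rintro _ x hx rfl
    exact hSsymm x (hl x hx))

lemma wordLength_inv (hSsymm : ∀ s ∈ S, s⁻¹ ∈ S) (hSgen : Subgroup.closure S = ⊤)
    (a : G) : wordLength S a⁻¹ = wordLength S a :=
  le_antisymm (wordLength_inv_le hSsymm hSgen a)
    (by simpa using wordLength_inv_le hSsymm hSgen a⁻¹)

lemma wordLength_conj_le (hSsymm : ∀ s ∈ S, s⁻¹ ∈ S) (hSgen : Subgroup.closure S = ⊤)
    (w s : G) : wordLength S (w * s * w⁻¹) ≤ 2 * wordLength S w + wordLength S s := by
  have hws := wordLength_mul_le hSsymm hSgen w s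
  have hconj := wordLength_mul_le hSsymm hSgen (w * s) w⁻¹
  rw [wordLength_inv hSsymm hSgen] at hconj
  omega

lemma wordDist_comm (hSsymm : ∀ s ∈ S, s⁻¹ ∈ S) (hSgen : Subgroup.closure S = ⊤)
    (x y : G) : wordDist S x y = wordDist S y x := by
  simpa [wordDist] using (wordLength_inv hSsymm hSgen (x⁻¹ * y)).symm

lemma wordDist_triangle (hSsymm : ∀ s ∈ S, s⁻¹ ∈ S) (hSgen : Subgroup.closure S = ⊤)
    (x y z : G) : wordDist S x z ≤ wordDist S x y + wordDist S y z := by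
  simpa [wordDist, mul_assoc] using wordLength_mul_le hSsymm hSgen (x⁻¹ * y) (y⁻¹ * z)

end WordMetric

namespace IsWordGeodesic

variable {G : Type*} [Group G] {S : Set G} {N : ℕ} {γ : Fin (N + 1) → G}

lemma wordDist_add_of_le (hgeo : IsWordGeodesic S N γ) {i j : Fin (N + 1)} (hij : i ≤ j) :
    wordDist S (γ i) (γ j) + i = j := by
  have h := hgeo i j
  have hij' : (i : ℕ) ≤ j := hij
  rw [abs_of_nonpos (by omega)] at h
  omega

lemma le_wordDist_add (hgeo : IsWordGeodesic S N γ) (i j : Fin (N + 1)) :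
    (i : ℕ) ≤ wordDist S (γ i) (γ j) + j := by
  have h := hgeo i j
  have := le_abs_self ((i : ℤ) - j)
  omega

lemma two_mul_wordLength_le (hSsymm : ∀ s ∈ S, s⁻¹ ∈ S) (hSgen : Subgroup.closure S = ⊤)
    (hgeo : IsWordGeodesic S N γ) {w s : G} (h0 : γ 0 = 1)
    (hN : γ (Fin.last N) = w * s * w⁻¹) (i j : Fin (N + 1)) :
    2 * wordLength S w ≤
      N + wordLength S s + 2 * (wordDist S w (γ i) + wordDist S (w * s) (γ j)) := by
  have tri := wordDist_triangle hSsymm hSgen (S := S)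
  have hwi : wordLength S w ≤ i + wordDist S w (γ i) := by
    calc wordLength S w = wordDist S (γ 0) w := by simp [wordDist, h0]
      _ ≤ wordDist S (γ 0) (γ i) + wordDist S (γ i) w := tri _ _ _
      _ = i + wordDist S w (γ i) := by
        rw [← hgeo.wordDist_add_of_le (Fin.zero_le i), wordDist_comm hSsymm hSgen (γ i)]
        simp
  -- `w⁻¹` is the step from `ws` to `r = w s w⁻¹`.
  have hwj : wordLength S w + j ≤ N + wordDist S (w * s) (γ j) := by
    have hjN := hgeo.wordDist_add_of_le (Fin.le_last j)
    have hw_eq : wordLength S w = wordDist S (w * s) (γ (Fin.last N)) := by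
      simp [wordDist, hN, mul_assoc, wordLength_inv hSsymm hSgen]
    have hvia_j := tri (w * s) (γ j) (γ (Fin.last N))
    simp only [Fin.val_last] at hjN
    omega
  have hij : (i : ℕ) ≤ j + wordDist S w (γ i) + wordLength S s + wordDist S (w * s) (γ j) := by
    have hs : wordDist S w (w * s) = wordLength S s := by simp [wordDist]
    have hgeo_ij := hgeo.le_wordDist_add i j
    have hvia_w := tri (γ i) w (γ j)
    have hvia_ws := tri w (w * s) (γ j)
    rw [wordDist_comm hSsymm hSgen (γ i) w] at hvia_w
    omega
  omega

end IsWordGeodesic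

theorem statement2_general {G : Type*} [Group G]
    (S : Set G) (hSsymm : ∀ s ∈ S, s⁻¹ ∈ S) (hSgen : Subgroup.closure S = ⊤)
    (r s w : G) (hconj : r = w * s * w⁻¹)
    (L₁ : ℝ)
    (N : ℕ) (γ : Fin (N + 1) → G) (hgeo : IsWordGeodesic S N γ)
    (h0 : γ 0 = 1) (hN : γ (Fin.last N) = r)
    (hw : ∃ i : Fin (N + 1), (wordDist S w (γ i) : ℝ) ≤ L₁)
    (hws : ∃ i : Fin (N + 1), (wordDist S (w * s) (γ i) : ℝ) ≤ L₁) :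
    ((wordLength S r : ℝ) - (wordLength S s : ℝ)) / 2 ≤ (wordLength S w : ℝ) ∧
      (wordLength S w : ℝ) ≤ ((wordLength S r : ℝ) + (wordLength S s : ℝ)) / 2 + 2 * L₁ := by
  obtain ⟨i, hi⟩ := hw
  obtain ⟨j, hj⟩ := hws
  have hNr : N = wordLength S r := by
    simpa [wordDist, h0, hN] using (hgeo.wordDist_add_of_le (Fin.zero_le (Fin.last N))).symm
  subst hconj
  have hlow : (wordLength S (w * s * w⁻¹) : ℝ) ≤ 2 * wordLength S w + wordLength S s := by
    exact_mod_cast wordLength_conj_le hSsymm hSgen w s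
  have hup : (2 * wordLength S w : ℝ) ≤ wordLength S (w * s * w⁻¹) + wordLength S s +
      2 * (wordDist S w (γ i) + wordDist S (w * s) (γ j)) := by
    rw [← hNr]
    exact_mod_cast hgeo.two_mul_wordLength_le hSsymm hSgen h0 hN i j
  constructor <;> linarith

/-- If `r = w s w⁻¹`, and both `w` and `ws` lie within distance `L₁` of (the image of) a
geodesic `γ 0 = 1, …, γ N = r` from the identity to `r` in the word metric of a symmetric
generating set `S`, then `(∥r∥ - ∥s∥)/2 ≤ ∥w∥ ≤ (∥r∥ + ∥s∥)/2 + 2 L₁`. -/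
theorem statement2 {G : Type*} [Group G]
    (S : Set G) (hSsymm : ∀ s ∈ S, s⁻¹ ∈ S) (hSgen : Subgroup.closure S = ⊤)
    (r s w : G) (hconj : r = w * s * w⁻¹)
    (L₁ : ℝ) (hL₁ : 0 ≤ L₁)
    (N : ℕ) (γ : Fin (N + 1) → G) (hgeo : IsWordGeodesic S N γ)
    (h0 : γ 0 = 1) (hN : γ (Fin.last N) = r)
    (hw : ∃ i : Fin (N + 1), (wordDist S w (γ i) : ℝ) ≤ L₁)
    (hws : ∃ i : Fin (N + 1), (wordDist S (w * s) (γ i) : ℝ) ≤ L₁) :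
    ((wordLength S r : ℝ) - (wordLength S s : ℝ)) / 2 ≤ (wordLength S w : ℝ) ∧
      (wordLength S w : ℝ) ≤ ((wordLength S r : ℝ) + (wordLength S s : ℝ)) / 2 + 2 * L₁ :=
  statement2_general S hSsymm hSgen r s w hconj L₁ N γ hgeo h0 hN hw hws
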